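/- Every subgroup of a CSN_k group is CSN_k. -/

import Mathlib

variable {G : Type*} [Group G]

/-- A subgroup is `nil_k`: nilpotent of class at most `k` (i.e. γ_{k+1} = 1). -/
def SubNilK (k : ℕ) (H : Subgroup G) : Prop := lowerCentralSeries H k = ⊥

/-- A subgroup `H ≤ G` is malnormal: `H ∩ g⁻¹Hg = 1` for all `g ∉ H`. -/
def Malnormal (H : Subgroup G) : Prop :=
  ∀ g ∉ H, ∀ y ∈ H, g * y * g⁻¹ ∈ H → y = 1

/-- `H` is a maximal nil_k subgroup of `G`. -/
def MaxNilK (k : ℕ) (H : Subgroup G) : Prop :=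
  SubNilK k H ∧ ∀ K : Subgroup G, SubNilK k K → H ≤ K → K = H

/-- `G` is NT_k: any two nil_k subgroups with nontrivial intersection generate
a nil_k subgroup. -/
def IsNTk (k : ℕ) (G : Type*) [Group G] : Prop :=
  ∀ K₁ K₂ : Subgroup G, SubNilK k K₁ → SubNilK k K₂ → K₁ ⊓ K₂ ≠ ⊥ →
    SubNilK k (K₁ ⊔ K₂)

/-- `G` is CSN_k: every maximal nil_k subgroup is malnormal. -/
def IsCSNk (k : ℕ) (G : Type*) [Group G] : Prop :=
  ∀ H : Subgroup G, MaxNilK k H → Malnormal H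

/-- `C^k_G(x) = { y : ⟨x, y⟩ is nilpotent of class at most k }`. -/
def CkSet (k : ℕ) (x : G) : Set G :=
  { y | SubNilK k (Subgroup.closure {x, y}) }

/-!
Let `M` be a maximal nil_k subgroup of `H`. Viewed in `G` it is still nil_k, so by Zorn's lemma
it lies in a maximal nil_k subgroup `N` of `G`; Zorn applies because the lower central series
of a directed union is the union of the lower central series. Then `N ∩ H` is nil_k and
contains `M`, hence equals `M`, and malnormality of `N` in `G` restricts to malnormality of
`N ∩ H` in `H`.
-/

open Subgroup

section SubNilK

variable {k : ℕ}

lemma subNilK_iff {K : Subgroup G} : SubNilK k K ↔ K.lowerCentralSeries k = ⊥ := Iff.rfl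

lemma SubNilK.mono {K N : Subgroup G} (hN : SubNilK k N) (h : K ≤ N) : SubNilK k K :=
  le_bot_iff.mp (hN ▸ lowerCentralSeries_mono k h)

lemma subNilK_map_iff {G' : Type*} [Group G'] {f : G →* G'} (hf : Function.Injective f)
    {K : Subgroup G} : SubNilK k (K.map f) ↔ SubNilK k K := by
  rw [subNilK_iff, subNilK_iff, ← map_lowerCentralSeries,
    map_eq_bot_iff_of_injective _ hf]

lemma SubNilK.comap {G' : Type*} [Group G'] {f : G →* G'} (hf : Function.Injective f)
    {K : Subgroup G'} (hK : SubNilK k K) : SubNilK k (K.comap f) :=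
  (subNilK_map_iff hf).mp (hK.mono (map_comap_le f K))

lemma lowerCentralSeries_iSup_le {ι : Type*} [Nonempty ι] {K : ι → Subgroup G}
    (hK : Directed (· ≤ ·) K) : ∀ n, (⨆ i, K i).lowerCentralSeries n ≤
      ⨆ i, (K i).lowerCentralSeries n
  | 0 => le_rfl
  | n + 1 => by
    rw [Subgroup.lowerCentralSeries_succ, commutator_le]
    intro a ha b hb
    obtain ⟨i, hai⟩ := (mem_iSup_of_directed (hK.mono_comp _ (lowerCentralSeries_mono n))).mp
      (lowerCentralSeries_iSup_le hK n ha)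
    obtain ⟨j, hbj⟩ := (mem_iSup_of_directed hK).mp hb
    obtain ⟨l, hil, hjl⟩ := hK i j
    exact mem_iSup_of_mem l
      (commutator_mem_commutator (lowerCentralSeries_mono n hil hai) (hjl hbj))

lemma subNilK_iSup {ι : Type*} [Nonempty ι] {K : ι → Subgroup G} (hK : Directed (· ≤ ·) K)
    (hnil : ∀ i, SubNilK k (K i)) : SubNilK k (⨆ i, K i) :=
  le_bot_iff.mp ((lowerCentralSeries_iSup_le hK k).trans (iSup_le fun i => (hnil i).le))

lemma exists_maxNilK_ge {K : Subgroup G} (hK : SubNilK k K) :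
    ∃ N : Subgroup G, K ≤ N ∧ MaxNilK k N := by
  obtain ⟨N, hKN, hN, hmax⟩ := zorn_le_nonempty₀ {K : Subgroup G | SubNilK k K}
    (fun c hcs hc L hL => by
      have : Nonempty c := ⟨⟨L, hL⟩⟩
      refine ⟨sSup c, ?_, fun _ => le_sSup⟩
      rw [sSup_eq_iSup']
      exact subNilK_iSup hc.directed fun L => hcs L.2) K hK
  exact ⟨N, hKN, hN, fun L hL hNL => le_antisymm (hmax hL hNL) hNL⟩

lemma MaxNilK.comap_eq {G' : Type*} [Group G'] {f : G →* G'} (hf : Function.Injective f)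
    {M : Subgroup G} (hM : MaxNilK k M) {N : Subgroup G'} (hN : SubNilK k N)
    (hMN : M.map f ≤ N) : N.comap f = M :=
  hM.2 _ (hN.comap hf) (map_le_iff_le_comap.mp hMN)

end SubNilK

lemma Malnormal.comap {G' : Type*} [Group G'] {f : G →* G'} (hf : Function.Injective f)
    {N : Subgroup G'} (hN : Malnormal N) : Malnormal (N.comap f) := by
  intro g hg y hy hconj
  exact hf (by simpa using hN (f g) hg (f y) hy (by simpa using hconj))

theorem stmt6 (k : ℕ) {G : Type*} [Group G] (hG : IsCSNk k G)
    (H : Subgroup G) :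
    IsCSNk k H := by
  intro M hM
  obtain ⟨N, hMN, hN⟩ := exists_maxNilK_ge ((subNilK_map_iff H.subtype_injective).mpr hM.1)
  rw [← hM.comap_eq H.subtype_injective hN.1 hMN]
  exact (hG N hN).comap H.subtype_injective
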